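/- Fix a finite measurement scenario. Every strongly contextual no-signalling empirical model e lies in a face F of the no-signalling polytope consisting entirely of strongly contextual models: every model e' in the carrier face of e is also strongly contextual. In particular every strongly contextual model is a convex combination of strongly contextual vertices. -/

import Mathlib

open Finset

variable {X O : Type*} [Fintype X] [DecidableEq X] [Fintype O] [DecidableEq O]

/-- The index of coordinates for empirical models over the scenario `(X, M, O)`:
one coordinate per context `C ∈ M` and assignment `s : C → O`. -/
abbrev Coord (M : Finset (Finset X)) (O : Type*) :=
  Σ C : {C : Finset X // C ∈ M}, ({x // x ∈ C.1} → O)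

/-- Restriction of an assignment on `C` to the overlap `C ∩ C'`. -/
def restrictL {M : Finset (Finset X)} (C C' : {C : Finset X // C ∈ M})
    (t : {x // x ∈ C.1} → O) : {x // x ∈ C.1 ∩ C'.1} → O :=
  fun x => t ⟨x.1, (Finset.mem_inter.mp x.2).1⟩

/-- Restriction of an assignment on `C'` to the overlap `C ∩ C'`. -/
def restrictR {M : Finset (Finset X)} (C C' : {C : Finset X // C ∈ M})
    (t : {x // x ∈ C'.1} → O) : {x // x ∈ C.1 ∩ C'.1} → O :=
  fun x => t ⟨x.1, (Finset.mem_inter.mp x.2).2⟩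

/-- `v` is a no-signalling empirical model: non-negative, normalized on each
context, and with agreeing marginals on overlaps of contexts. -/
def IsNSModel {M : Finset (Finset X)} (v : Coord M O → ℝ) : Prop :=
  (∀ i, 0 ≤ v i) ∧
  (∀ C : {C : Finset X // C ∈ M}, ∑ s : ({x // x ∈ C.1} → O), v ⟨C, s⟩ = 1) ∧
  (∀ C C' : {C : Finset X // C ∈ M}, ∀ s : ({x // x ∈ C.1 ∩ C'.1} → O),
    ∑ t ∈ Finset.univ.filter (fun t => restrictL C C' t = s), v ⟨C, t⟩ =
    ∑ t' ∈ Finset.univ.filter (fun t' => restrictR C C' t' = s), v ⟨C', t'⟩)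

/-- A model is strongly contextual if no global assignment is consistent with
its support. -/
def StronglyContextual {M : Finset (Finset X)} (v : Coord M O → ℝ) : Prop :=
  ¬ ∃ g : X → O, ∀ C : {C : Finset X // C ∈ M}, 0 < v ⟨C, fun x => g x.1⟩

/-- `F` is a face of `P`: the zero set in `P` of a valid linear inequality. -/
def IsFace {ι : Type*} [Fintype ι] (P F : Set (ι → ℝ)) : Prop :=
  ∃ (a : ι → ℝ) (b : ℝ), (∀ x ∈ P, b ≤ ∑ i, a i * x i) ∧
    F = {x ∈ P | ∑ i, a i * x i = b}

/-!
A strongly contextual model stays strongly contextual when its support shrinks, since a global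
assignment consistent with the smaller support is consistent with the larger one. The models whose
support lies in that of `e` form a face of the no-signalling polytope, cut out by the valid
inequality `∑_{e i = 0} v i ≥ 0`. The polytope is a bounded polyhedron in standard form
`{v ≥ 0} ∩ A` with `A` affine, so every point of it is a convex combination of vertices with no
larger support: a non-vertex can be pushed both ways along a line inside `A` until a coordinate
vanishes, which writes it as a point of a segment whose endpoints have strictly smaller support.
-/

open Set Function

theorem StronglyContextual.of_pos_imp_pos {X O : Type*} {M : Finset (Finset X)}
    {e e' : Coord M O → ℝ} (he : StronglyContextual e) (h : ∀ i, 0 < e' i → 0 < e i) :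
    StronglyContextual e' :=
  fun ⟨g, hg⟩ => he ⟨g, fun C => h _ (hg C)⟩

section StandardFormPolyhedron

variable {ι : Type*} {A : AffineSubspace ℝ (ι → ℝ)}

local notation "𝐏" => (Set.Ici 0 ∩ (A : Set (ι → ℝ)))

theorem support_subset_of_mem_openSegment {x y z : ι → ℝ} (hy : 0 ≤ y) (hz : 0 ≤ z)
    (h : x ∈ openSegment ℝ y z) : support y ⊆ support x := by
  obtain ⟨a, b, ha, hb, -, rfl⟩ := h
  intro i hyi hxi
  simp only [Pi.add_apply, Pi.smul_apply, smul_eq_mul] at hxi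
  nlinarith [mul_nonneg hb.le (hz i), mul_pos ha ((hy i).lt_of_ne' hyi)]

theorem exists_lt_of_ne_of_isBounded (hP : Bornology.IsBounded 𝐏)
    {y z : ι → ℝ} (hy : y ∈ 𝐏) (hz : z ∈ 𝐏) (hne : y ≠ z) : ∃ i, y i < z i := by
  -- Otherwise `y + n • (y - z)` stays in the polyhedron for every `n : ℕ`.
  by_contra! hzy
  obtain ⟨j, hj⟩ := Function.ne_iff.mp hne
  have hδ : 0 < y j - z j := sub_pos.mpr ((hzy j).lt_of_ne' hj)
  obtain ⟨C, hC⟩ := (hP.image_eval j).bddAbove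
  obtain ⟨n, hn⟩ := exists_nat_gt (C / (y j - z j))
  have hmem : y + (n : ℝ) • (y - z) ∈ 𝐏 := by
    refine ⟨mem_Ici.2 <| add_nonneg hy.1 (smul_nonneg n.cast_nonneg (sub_nonneg.mpr hzy)), ?_⟩
    rw [add_comm]
    exact A.smul_vsub_vadd_mem _ hy.2 hz.2 hy.2
  have hle := hC (mem_image_of_mem (eval j) hmem)
  rw [div_lt_iff₀ hδ] at hn
  simp only [eval, Pi.add_apply, Pi.smul_apply, Pi.sub_apply, smul_eq_mul] at hle
  have hyj : 0 ≤ y j := hy.1 j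
  linarith

variable [Finite ι]

theorem exists_pos_nonneg_add_smul_support_ssubset {x d : ι → ℝ} (hx : 0 ≤ x)
    (hd : support d ⊆ support x) (hneg : ∃ i, d i < 0) :
    ∃ t : ℝ, 0 < t ∧ 0 ≤ x + t • d ∧ support (x + t • d) ⊂ support x := by
  -- The step size is the first ratio `x i / -d i` at which a coordinate reaches zero.
  obtain ⟨i₀, hi₀, hmin⟩ := Set.exists_min_image {i | d i < 0} (fun i => x i / -d i)
    (Set.toFinite _) hneg
  have hdi₀ : 0 < -d i₀ := neg_pos.mpr hi₀
  have hxi₀ : 0 < x i₀ := (hx i₀).lt_of_ne' (hd hi₀.ne)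
  refine ⟨x i₀ / -d i₀, div_pos hxi₀ hdi₀, fun i => ?_, ?_⟩
  · rcases lt_or_ge (d i) 0 with hdi | hdi
    · have := (le_div_iff₀ (neg_pos.mpr hdi)).mp (hmin i hdi)
      simp only [Pi.zero_apply, Pi.add_apply, Pi.smul_apply, smul_eq_mul]
      linarith
    · exact add_nonneg (hx i) (mul_nonneg (div_pos hxi₀ hdi₀).le hdi)
  · refine ssubset_of_subset_not_subset
      ((support_add _ _).trans (union_subset subset_rfl
        ((support_smul_subset_right _ _).trans hd))) fun h => h hxi₀.ne' ?_
    simp only [Pi.add_apply, Pi.smul_apply, smul_eq_mul]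
    rw [div_neg, neg_mul, div_mul_cancel₀ _ hi₀.ne, add_neg_cancel]

theorem exists_mem_segment_support_ssubset (hP : Bornology.IsBounded 𝐏)
    {x : ι → ℝ} (hx : x ∈ 𝐏) (hext : x ∉ extremePoints ℝ 𝐏) :
    ∃ x₁ ∈ 𝐏, support x₁ ⊂ support x ∧ ∃ x₂ ∈ 𝐏, support x₂ ⊂ support x ∧ x ∈ segment ℝ x₁ x₂ := by
  rw [mem_extremePoints_iff_left] at hext
  push Not at hext
  obtain ⟨y, hy, z, hz, hseg, hyx⟩ := hext hx
  have hyz : y ≠ z := by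
    rintro rfl
    have hxy : x = y := by simpa using hseg
    exact hyx hxy.symm
  set d := y - z
  have hd : support d ⊆ support x :=
    (support_sub _ _).trans (union_subset (support_subset_of_mem_openSegment hy.1 hz.1 hseg)
      (support_subset_of_mem_openSegment hz.1 hy.1 (openSegment_symm ℝ y z ▸ hseg)))
  have hmem : ∀ t : ℝ, 0 ≤ x + t • d → x + t • d ∈ 𝐏 :=
    fun t ht => ⟨ht, by rw [add_comm]; exact A.smul_vsub_vadd_mem t hy.2 hz.2 hx.2⟩
  obtain ⟨s, hs, hs₀, hss⟩ := exists_pos_nonneg_add_smul_support_ssubset hx.1 hd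
    (by simpa [d] using exists_lt_of_ne_of_isBounded hP hy hz hyz)
  obtain ⟨t, ht, ht₀, hts⟩ := exists_pos_nonneg_add_smul_support_ssubset (d := -d) hx.1
    (by rwa [support_neg]) (by simpa [d] using exists_lt_of_ne_of_isBounded hP hz hy hyz.symm)
  rw [smul_neg, ← neg_smul] at ht₀ hts
  refine ⟨_, hmem s hs₀, hss, _, hmem (-t) ht₀, hts, ?_⟩
  rw [mem_segment_iff_sameRay, sub_add_cancel_left, add_sub_cancel_left, ← smul_neg, neg_smul,
    ← smul_neg]
  exact (SameRay.sameRay_nonneg_smul_left (-d) hs.le).nonneg_smul_right ht.le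

theorem mem_convexHull_extremePoints_support_subset (hP : Bornology.IsBounded 𝐏)
    {x : ι → ℝ} (hx : x ∈ 𝐏) :
    x ∈ convexHull ℝ {v ∈ extremePoints ℝ 𝐏 | support v ⊆ support x} := by
  induction hn : (support x).ncard using Nat.strong_induction_on generalizing x with
  | _ n ih =>
  by_cases hext : x ∈ extremePoints ℝ 𝐏
  · exact subset_convexHull ℝ _ ⟨hext, subset_rfl⟩
  have hsmaller : ∀ v ∈ 𝐏, support v ⊂ support x →
      v ∈ convexHull ℝ {v ∈ extremePoints ℝ 𝐏 | support v ⊆ support x} := by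
    intro v hv hvx
    refine convexHull_mono ?_ (ih _ (hn ▸ ncard_lt_ncard hvx) hv rfl)
    exact fun w hw => ⟨hw.1, hw.2.trans hvx.subset⟩
  obtain ⟨x₁, hx₁, hs₁, x₂, hx₂, hs₂, hseg⟩ := exists_mem_segment_support_ssubset hP hx hext
  exact (convex_convexHull ℝ _).segment_subset (hsmaller x₁ hx₁ hs₁) (hsmaller x₂ hx₂ hs₂) hseg

end StandardFormPolyhedron

theorem isFace_setOf_support_subset {ι : Type*} [Fintype ι] {P : Set (ι → ℝ)}
    (hP : ∀ x ∈ P, 0 ≤ x) (e : ι → ℝ) : IsFace P {x ∈ P | support x ⊆ support e} := by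
  classical
  have hterm : ∀ x ∈ P, ∀ i, 0 ≤ (if e i = 0 then 1 else 0) * x i := fun x hx i =>
    mul_nonneg (by split_ifs <;> norm_num) (hP x hx i)
  refine ⟨fun i => if e i = 0 then 1 else 0, 0,
    fun x hx => Finset.sum_nonneg fun i _ => hterm x hx i, ?_⟩
  refine Set.ext fun x => and_congr_right fun hx => ?_
  rw [Finset.sum_eq_zero_iff_of_nonneg fun i _ => hterm x hx i]
  simpa using forall_congr' fun i => not_imp_not

section NoSignalling

variable {X : Type*} [DecidableEq X] (M : Finset (Finset X)) (O : Type*) [Fintype O] [DecidableEq O]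

def nsAffineSubspace : AffineSubspace ℝ (Coord M O → ℝ) where
  carrier := {v | (∀ C : {C : Finset X // C ∈ M}, ∑ s : ({x // x ∈ C.1} → O), v ⟨C, s⟩ = 1) ∧
    (∀ C C' : {C : Finset X // C ∈ M}, ∀ s : ({x // x ∈ C.1 ∩ C'.1} → O),
      ∑ t ∈ Finset.univ.filter (fun t => restrictL C C' t = s), v ⟨C, t⟩ =
      ∑ t' ∈ Finset.univ.filter (fun t' => restrictR C C' t' = s), v ⟨C', t'⟩)}
  smul_vsub_vadd_mem' c p₁ p₂ p₃ h₁ h₂ h₃ := by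
    refine ⟨fun C => ?_, fun C C' s => ?_⟩
    · simp only [vsub_eq_sub, vadd_eq_add, Pi.add_apply, Pi.smul_apply, Pi.sub_apply, smul_eq_mul,
        Finset.sum_add_distrib, ← Finset.mul_sum, Finset.sum_sub_distrib, h₁.1, h₂.1, h₃.1]
      ring
    · simp only [vsub_eq_sub, vadd_eq_add, Pi.add_apply, Pi.smul_apply, Pi.sub_apply, smul_eq_mul,
        Finset.sum_add_distrib, ← Finset.mul_sum, Finset.sum_sub_distrib, h₁.2 C C' s,
        h₂.2 C C' s, h₃.2 C C' s]

theorem setOf_isNSModel_eq :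
    {v : Coord M O → ℝ | IsNSModel v} = Set.Ici 0 ∩ (nsAffineSubspace M O : Set (Coord M O → ℝ)) :=
  rfl

theorem isBounded_setOf_isNSModel :
    Bornology.IsBounded {v : Coord M O → ℝ | IsNSModel v} :=
  (Metric.isBounded_Icc (0 : Coord M O → ℝ) 1).subset fun _ hv =>
    ⟨hv.1, fun ⟨C, s⟩ => (Finset.single_le_sum (fun t _ => hv.1 ⟨C, t⟩)
      (Finset.mem_univ s)).trans_eq (hv.2.1 C)⟩

end NoSignalling

theorem stmt16_general {X O : Type*} [DecidableEq X] [Fintype O] [DecidableEq O]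
    (M : Finset (Finset X)) (N : Set (Coord (X := X) M O → ℝ))
    (hN : N = {v | IsNSModel v})
    (e : Coord (X := X) M O → ℝ) (he : e ∈ N) (hSC : StronglyContextual e) :
    (∀ e' ∈ N, (∀ i, 0 < e' i → 0 < e i) → StronglyContextual e') ∧
    (∃ F : Set (Coord (X := X) M O → ℝ), IsFace N F ∧ e ∈ F ∧
      ∀ e' ∈ F, StronglyContextual e') ∧
    e ∈ convexHull ℝ {v ∈ Set.extremePoints ℝ N | StronglyContextual v} := by
  subst hN
  have hsupp : ∀ v, support v ⊆ support e → StronglyContextual v := fun v hv =>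
    hSC.of_pos_imp_pos fun i hi => (he.1 i).lt_of_ne' (hv hi.ne')
  refine ⟨fun e' _ => hSC.of_pos_imp_pos, ⟨_, isFace_setOf_support_subset (fun v hv => hv.1) e,
    ⟨he, subset_rfl⟩, fun v hv => hsupp v hv.2⟩, ?_⟩
  have hbdd := isBounded_setOf_isNSModel M O
  rw [setOf_isNSModel_eq] at he hbdd ⊢
  refine convexHull_mono ?_ (mem_convexHull_extremePoints_support_subset hbdd he)
  exact fun v hv => ⟨hv.1, hsupp v hv.2⟩

theorem stmt16 {X O : Type*} [Fintype X] [DecidableEq X] [Fintype O] [DecidableEq O]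
    (M : Finset (Finset X)) (N : Set (Coord (X := X) M O → ℝ))
    (hN : N = {v | IsNSModel v})
    (e : Coord (X := X) M O → ℝ) (he : e ∈ N) (hSC : StronglyContextual e) :
    (∀ e' ∈ N, (∀ i, 0 < e' i → 0 < e i) → StronglyContextual e') ∧
    (∃ F : Set (Coord (X := X) M O → ℝ), IsFace N F ∧ e ∈ F ∧
      ∀ e' ∈ F, StronglyContextual e') ∧
    e ∈ convexHull ℝ {v ∈ Set.extremePoints ℝ N | StronglyContextual v} :=
  stmt16_general M N hN e he hSC
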